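/- Let H be a connected finite simple block graph and let B be a block of H with vertex set V(B) = {u_1, u_2, …, u_k}. For each 1 ≤ i ≤ k, let G_i denote the connected component containing u_i of the subgraph of H induced by (V(H) ∖ V(B)) ∪ {u_i}, and for S ⊆ V(H) write S_i = S ∩ V(G_i). If S is a paired-dominating set of H with u_1 ∈ S, then S_1 contains u_1, S_1 is a dominating set of G_1, and either the induced subgraph G_1[S_1] has a perfect matching or the induced subgraph G_1[S_1 ∖ {u_1}] has a perfect matching. -/

import Mathlib

open SimpleGraph

variable {V : Type*}

/-- `S` is a dominating set of `G`. -/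
def Dominating (G : SimpleGraph V) (S : Set V) : Prop :=
  ∀ v ∉ S, ∃ u ∈ S, G.Adj v u

/-- Within the subgraph of `G` induced by `A` (for `S ⊆ A`), the set `S` dominates
every vertex of `A \ S`. -/
def DominatingOn (G : SimpleGraph V) (A S : Set V) : Prop :=
  ∀ v ∈ A, v ∉ S → ∃ w ∈ S, G.Adj v w

/-- The induced subgraph `G[S]` has a perfect matching, i.e. there is a matching of `G`
whose vertex set is exactly `S`. -/
def HasPerfectMatchingOn (G : SimpleGraph V) (S : Set V) : Prop :=
  ∃ M : G.Subgraph, M.verts = S ∧ M.IsMatching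

/-- `S` is a paired-dominating set of `G`. -/
def PairedDominating (G : SimpleGraph V) (S : Set V) : Prop :=
  Dominating G S ∧ HasPerfectMatchingOn G S

/-- `v` is a cut vertex: deleting it disconnects the graph. -/
def IsCutVertex (G : SimpleGraph V) (v : V) : Prop :=
  ¬ (G.induce ({v}ᶜ : Set V)).Preconnected

/-- The graph has no cut vertex. -/
def HasNoCutVertex (G : SimpleGraph V) : Prop :=
  ∀ v : V, ¬ IsCutVertex G v

/-- `B` is a block of `G`: a maximal vertex set inducing a connected subgraph with no
cut vertex. -/
def IsBlock (G : SimpleGraph V) (B : Set V) : Prop :=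
  (G.induce B).Connected ∧ HasNoCutVertex (G.induce B) ∧
    ∀ B' : Set V, B ⊆ B' → (G.induce B').Connected → HasNoCutVertex (G.induce B') → B' = B

/-- `G` is a block graph: every block is a complete subgraph. -/
def IsBlockGraph (G : SimpleGraph V) : Prop :=
  ∀ B : Set V, IsBlock G B → B.Pairwise G.Adj

/-- The vertex set of the connected component containing `u` of the subgraph of `G`
induced by `A`. -/
def componentOf (G : SimpleGraph V) (A : Set V) (u : V) : Set V :=
  {v | ∃ (hu : u ∈ A) (hv : v ∈ A), (G.induce A).Reachable ⟨u, hu⟩ ⟨v, hv⟩}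

/-!
Let `u` be a vertex of the block `B` and `C` the component of `u` in `H - (B \ {u})`. No vertex
of `C` other than `u` has a neighbour in `B \ {u}`: otherwise a `u`–`v` path in `C` together with
the edge `vw` and the clique `B` would give a strictly larger set without cut vertex, contradicting
the maximality of `B`. Hence `C` is closed under taking neighbours of vertices other than `u`, and
restricting `S` to `C` keeps domination and keeps every matching edge of `S` except possibly the
one at `u`.
-/

lemma preconnected_induce_of_forall_exists_walk_to_clique {G : SimpleGraph V} {D K : Set V}
    (hKD : K ⊆ D) (hK : K.Pairwise G.Adj)
    (h : ∀ z ∈ D, ∃ k ∈ K, ∃ p : G.Walk z k, ∀ x ∈ p.support, x ∈ D) :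
    (G.induce D).Preconnected := by
  have hreach : ∀ z (hz : z ∈ D), ∃ k, ∃ hk : k ∈ K, (G.induce D).Reachable ⟨z, hz⟩ ⟨k, hKD hk⟩ :=
    fun z hz ↦ by
      obtain ⟨k, hk, p, hp⟩ := h z hz
      exact ⟨k, hk, (p.induce D hp).reachable⟩
  rintro ⟨a, ha⟩ ⟨b, hb⟩
  obtain ⟨k, hk, hak⟩ := hreach a ha
  obtain ⟨l, hl, hbl⟩ := hreach b hb
  have hkl : (G.induce D).Reachable ⟨k, hKD hk⟩ ⟨l, hKD hl⟩ := by
    by_cases e : k = l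
    · subst e; rfl
    · exact Adj.reachable (hK hk hl e)
  exact hak.trans (hkl.trans hbl.symm)

lemma hasNoCutVertex_induce_of_forall_preconnected_diff {G : SimpleGraph V} {C : Set V}
    (h : ∀ x ∈ C, (G.induce (C \ {x})).Preconnected) : HasNoCutVertex (G.induce C) := by
  rintro ⟨x, hx⟩ hcut
  let f : G.induce (C \ {x}) →g (G.induce C).induce {⟨x, hx⟩}ᶜ :=
    ⟨fun y ↦ ⟨⟨y, y.2.1⟩, fun hy ↦ y.2.2 (congrArg Subtype.val hy)⟩, id⟩
  refine hcut ((h x hx).map f ?_)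
  rintro ⟨⟨y, hyC⟩, hy⟩
  exact ⟨⟨y, hyC, fun hyx ↦ hy (Subtype.ext hyx)⟩, rfl⟩

lemma SimpleGraph.Walk.IsPath.eq_of_mem_takeUntil_of_mem_dropUntil [DecidableEq V]
    {G : SimpleGraph V} {a b c x : V} {p : G.Walk a b} (hp : p.IsPath) (hc : c ∈ p.support)
    (hx₁ : x ∈ (p.takeUntil c hc).support) (hx₂ : x ∈ (p.dropUntil c hc).support) : x = c := by
  have hnd := hp.support_nodup
  rw [← p.take_spec hc, Walk.support_append] at hnd
  rw [← Walk.cons_tail_support (p.dropUntil c hc), List.mem_cons] at hx₂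
  exact hx₂.resolve_right (List.disjoint_of_nodup_append hnd hx₁)

lemma exists_isPath_of_mem_componentOf {G : SimpleGraph V} {A : Set V} {u v : V}
    (hv : v ∈ componentOf G A u) : ∃ p : G.Walk u v, p.IsPath ∧ ∀ x ∈ p.support, x ∈ A := by
  classical
  obtain ⟨huA, hvA, ⟨W⟩⟩ := hv
  let e := Embedding.induce (G := G) A
  refine ⟨W.bypass.map e.toHom, W.bypass_isPath.map e.injective, fun x hx ↦ ?_⟩
  obtain ⟨y, -, rfl⟩ := List.mem_map.1 (W.bypass.support_map _ ▸ hx)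
  exact y.2

lemma self_mem_componentOf {G : SimpleGraph V} {A : Set V} {u : V} (hu : u ∈ A) :
    u ∈ componentOf G A u :=
  ⟨hu, hu, Reachable.refl _⟩

lemma mem_componentOf_of_adj {G : SimpleGraph V} {A : Set V} {u v x : V}
    (hv : v ∈ componentOf G A u) (hx : x ∈ A) (hvx : G.Adj v x) : x ∈ componentOf G A u := by
  obtain ⟨huA, hvA, hr⟩ := hv
  exact ⟨huA, hx, hr.trans (Adj.reachable (G := G.induce A) (u := ⟨v, hvA⟩) (v := ⟨x, hx⟩) hvx)⟩

lemma IsBlock.not_adj_of_mem_componentOf {H : SimpleGraph V} (hbg : IsBlockGraph H) {B : Set V}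
    (hB : IsBlock H B) {u v w : V} (huB : u ∈ B) (hv : v ∈ componentOf H (Bᶜ ∪ {u}) u)
    (hvu : v ≠ u) (hwB : w ∈ B) (hwu : w ≠ u) : ¬ H.Adj v w := by
  classical
  intro hvw
  obtain ⟨P, hP, hPA⟩ := exists_isPath_of_mem_componentOf hv
  have hBadj : B.Pairwise H.Adj := hbg B hB
  set C : Set V := B ∪ {x | x ∈ P.support}
  have hPC : ∀ x ∈ P.support, x ∈ C := fun x hx ↦ Or.inr hx
  have hwP : w ∉ P.support := fun h ↦ (hPA w h).elim (· hwB) hwu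
  have hconn : (H.induce C).Connected :=
    induce_union_connected hB.1.preconnected P.connected_induce_support.preconnected
      ⟨u, huB, P.start_mem_support⟩
  have hnocut : HasNoCutVertex (H.induce C) := by
    refine hasNoCutVertex_induce_of_forall_preconnected_diff fun x _ ↦ ?_
    refine preconnected_induce_of_forall_exists_walk_to_clique (K := B \ {x})
      (Set.sdiff_subset_sdiff_left Set.subset_union_left) (hBadj.mono Set.sdiff_subset) ?_
    rintro z ⟨hzB | hzP, hzx⟩
    · exact ⟨z, ⟨hzB, hzx⟩, Walk.nil, by simpa using ⟨Or.inl hzB, hzx⟩⟩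
    by_cases hxT : x ∈ (P.takeUntil z hzP).support
    · -- `x` lies strictly before `z` on `P`, so the rest of `P` from `z` avoids it
      have hxD : x ∉ (P.dropUntil z hzP).support := fun hxD ↦
        hzx (hP.eq_of_mem_takeUntil_of_mem_dropUntil hzP hxT hxD).symm
      have hxw : w ≠ x := fun h ↦ hwP (h ▸ P.support_takeUntil_subset_support hzP hxT)
      refine ⟨w, ⟨hwB, hxw⟩, (P.dropUntil z hzP).concat hvw, ?_⟩
      simp only [Walk.support_concat, List.mem_append, List.mem_singleton]
      rintro y (hy | rfl)
      · exact ⟨hPC y (P.support_dropUntil_subset_support hzP hy), fun h ↦ hxD (h ▸ hy)⟩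
      · exact ⟨Or.inl hwB, hxw⟩
    · have hxu : u ≠ x := fun h ↦ hxT (h ▸ Walk.start_mem_support _)
      refine ⟨u, ⟨huB, hxu⟩, (P.takeUntil z hzP).reverse, ?_⟩
      simp only [Walk.support_reverse, List.mem_reverse]
      exact fun y hy ↦ ⟨hPC y (P.support_takeUntil_subset_support hzP hy), fun h ↦ hxT (h ▸ hy)⟩
  have hCB : C = B := hB.2.2 C Set.subset_union_left hconn hnocut
  have hvB : v ∈ B := hCB ▸ hPC v P.end_mem_support
  exact (hPA v P.end_mem_support).elim (· hvB) hvu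

lemma IsBlock.mem_componentOf_of_adj_of_ne {H : SimpleGraph V} (hbg : IsBlockGraph H) {B : Set V}
    (hB : IsBlock H B) {u v x : V} (huB : u ∈ B) (hv : v ∈ componentOf H (Bᶜ ∪ {u}) u)
    (hvu : v ≠ u) (hvx : H.Adj v x) : x ∈ componentOf H (Bᶜ ∪ {u}) u := by
  by_cases hxB : x ∈ B
  · by_cases hxu : x = u
    · exact hxu ▸ self_mem_componentOf (Or.inr rfl)
    · exact absurd hvx (hB.not_adj_of_mem_componentOf hbg huB hv hvu hxB hxu)
  · exact mem_componentOf_of_adj hv (Or.inl hxB) hvx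

lemma hasPerfectMatchingOn_of_isMatching_of_forall_adj_mem {G : SimpleGraph V} {M : G.Subgraph}
    (hM : M.IsMatching) {T : Set V} (hT : T ⊆ M.verts) (hclosed : ∀ a ∈ T, ∀ b, M.Adj a b → b ∈ T) :
    HasPerfectMatchingOn G T := by
  refine ⟨M.induce T, rfl, fun a ha ↦ ?_⟩
  obtain ⟨b, hab, huniq⟩ := hM (hT ha)
  exact ⟨b, ⟨ha, hclosed a ha b hab, hab⟩, fun y hy ↦ huniq y hy.2.2⟩

section PairedDominating

variable {G : SimpleGraph V} {S T : Set V} {u : V}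

lemma PairedDominating.dominatingOn_inter (hS : PairedDominating G S) (huS : u ∈ S)
    (hT : ∀ v ∈ T, v ≠ u → ∀ x, G.Adj v x → x ∈ T) : DominatingOn G T (S ∩ T) := by
  intro v hvT hvST
  have hvS : v ∉ S := fun h ↦ hvST ⟨h, hvT⟩
  obtain ⟨x, hxS, hvx⟩ := hS.1 v hvS
  exact ⟨x, ⟨hxS, hT v hvT (by rintro rfl; exact hvS huS) x hvx⟩, hvx⟩

lemma PairedDominating.hasPerfectMatchingOn_inter_or_diff (hS : PairedDominating G S)
    (huS : u ∈ S) (huT : u ∈ T) (hT : ∀ v ∈ T, v ≠ u → ∀ x, G.Adj v x → x ∈ T) :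
    HasPerfectMatchingOn G (S ∩ T) ∨ HasPerfectMatchingOn G ((S ∩ T) \ {u}) := by
  obtain ⟨M, rfl, hM⟩ := hS.2
  have hstep : ∀ a ∈ M.verts ∩ T, a ≠ u → ∀ b, M.Adj a b → b ∈ M.verts ∩ T :=
    fun a ha hau b hab ↦ ⟨M.edge_vert hab.symm, hT a ha.2 hau b (M.adj_sub hab)⟩
  obtain ⟨p, hup, -⟩ := hM huS
  by_cases hpT : p ∈ T
  · refine .inl (hasPerfectMatchingOn_of_isMatching_of_forall_adj_mem hM Set.inter_subset_left ?_)
    intro a ha b hab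
    by_cases hau : a = u
    · subst hau
      exact hM.eq_of_adj_left hup hab ▸ ⟨M.edge_vert hup.symm, hpT⟩
    · exact hstep a ha hau b hab
  · refine .inr (hasPerfectMatchingOn_of_isMatching_of_forall_adj_mem hM
      (Set.sdiff_subset.trans Set.inter_subset_left) ?_)
    rintro a ⟨ha, hau⟩ b hab
    refine ⟨hstep a ha hau b hab, ?_⟩
    rintro rfl
    exact hpT (hM.eq_of_adj_left hup hab.symm ▸ ha.2)

end PairedDominating

theorem stmt_9_general {V : Type*} (H : SimpleGraph V)
    (hbg : IsBlockGraph H) (B : Set V) (hB : IsBlock H B)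
    (k : ℕ) (hk : 0 < k) (u : Fin k → V)
    (hurange : Set.range u = B)
    (G' : Fin k → Set V) (hG' : ∀ i : Fin k, G' i = componentOf H (Bᶜ ∪ {u i}) (u i))
    (S : Set V) (hpd : PairedDominating H S) (hu₁ : u ⟨0, hk⟩ ∈ S) :
    u ⟨0, hk⟩ ∈ S ∩ G' ⟨0, hk⟩ ∧
      DominatingOn H (G' ⟨0, hk⟩) (S ∩ G' ⟨0, hk⟩) ∧
      (HasPerfectMatchingOn H (S ∩ G' ⟨0, hk⟩) ∨
        HasPerfectMatchingOn H ((S ∩ G' ⟨0, hk⟩) \ {u ⟨0, hk⟩})) := by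
  have huB : u ⟨0, hk⟩ ∈ B := hurange ▸ Set.mem_range_self _
  have huG : u ⟨0, hk⟩ ∈ G' ⟨0, hk⟩ := hG' _ ▸ self_mem_componentOf (Or.inr rfl)
  have hclosed : ∀ v ∈ G' ⟨0, hk⟩, v ≠ u ⟨0, hk⟩ → ∀ x, H.Adj v x → x ∈ G' ⟨0, hk⟩ := by
    rw [hG']
    exact fun v hv hvu x hvx ↦ hB.mem_componentOf_of_adj_of_ne hbg huB hv hvu hvx
  exact ⟨⟨hu₁, huG⟩, hpd.dominatingOn_inter hu₁ hclosed,
    hpd.hasPerfectMatchingOn_inter_or_diff hu₁ huG hclosed⟩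

theorem stmt_9 {V : Type*} [Fintype V] (H : SimpleGraph V) (hH : H.Connected)
    (hbg : IsBlockGraph H) (B : Set V) (hB : IsBlock H B)
    (k : ℕ) (hk : 0 < k) (u : Fin k → V) (huinj : Function.Injective u)
    (hurange : Set.range u = B)
    (G' : Fin k → Set V) (hG' : ∀ i : Fin k, G' i = componentOf H (Bᶜ ∪ {u i}) (u i))
    (S : Set V) (hpd : PairedDominating H S) (hu₁ : u ⟨0, hk⟩ ∈ S) :
    u ⟨0, hk⟩ ∈ S ∩ G' ⟨0, hk⟩ ∧
      DominatingOn H (G' ⟨0, hk⟩) (S ∩ G' ⟨0, hk⟩) ∧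
      (HasPerfectMatchingOn H (S ∩ G' ⟨0, hk⟩) ∨
        HasPerfectMatchingOn H ((S ∩ G' ⟨0, hk⟩) \ {u ⟨0, hk⟩})) :=
  stmt_9_general H hbg B hB k hk u hurange G' hG' S hpd hu₁
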